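/- arXiv:1602.01133 — 4 statements merged into one kernel-verified Lean document; each statement's English description precedes it below -/
import Mathlib

section
/- If a positive integer n is divisible by 25 and can be written as n = p² + q² with p and q both odd, then n can be written as n = a² + b² where a and b are both odd and a is not congruent to b modulo 4. -/
theorem stmt_8 (n : ℤ) (hn : 0 < n) (h25 : (25 : ℤ) ∣ n)
    (h : ∃ p q : ℤ, n = p ^ 2 + q ^ 2 ∧ Odd p ∧ Odd q) :
    ∃ a b : ℤ, n = a ^ 2 + b ^ 2 ∧ Odd a ∧ Odd b ∧ ¬ a ≡ b [ZMOD 4] := by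
  obtain ⟨p, q, hpq, hp, hq⟩ := h
  by_cases h4 : p ≡ q [ZMOD 4]
  · refine ⟨p, -q, by ring_nf; linarith [hpq], hp, hq.neg, ?_⟩
    intro hc
    obtain ⟨k, hk⟩ := hq
    have d1 : (4 : ℤ) ∣ q - p := h4.dvd
    have d2 : (4 : ℤ) ∣ -q - p := hc.dvd
    omega
  · exact ⟨p, q, hpq, hp, hq, h4⟩
end

section
/- If a positive integer n is divisible by 169 and can be written as n = p² + q² with p and q both odd, then n can be written as n = a² + b² where a and b are both odd and a is not congruent to b modulo 4. -/
theorem stmt_9 (n : ℤ) (hn : 0 < n) (h169 : (169 : ℤ) ∣ n)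
    (h : ∃ p q : ℤ, n = p ^ 2 + q ^ 2 ∧ Odd p ∧ Odd q) :
    ∃ a b : ℤ, n = a ^ 2 + b ^ 2 ∧ Odd a ∧ Odd b ∧ ¬ a ≡ b [ZMOD 4] := by
  obtain ⟨p, q, hpq, hp, hq⟩ := h
  obtain ⟨k, hk⟩ := hp
  obtain ⟨l, hl⟩ := hq
  by_cases hmod : p ≡ q [ZMOD 4]
  · have hmod4 : p % 4 = q % 4 := hmod
    have h13 : (13 : ℤ) ∣ p ^ 2 + q ^ 2 := by
      have h1 : (13 : ℤ) ∣ 169 := by norm_num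
      exact hpq ▸ h1.trans h169
    have hprod : (13 : ℤ) ∣ (5 * p + 12 * q) * (5 * p - 12 * q) := by
      have he : (5 * p + 12 * q) * (5 * p - 12 * q)
          = 25 * (p ^ 2 + q ^ 2) - 13 * (13 * q ^ 2) := by ring
      rw [he]
      exact dvd_sub (h13.mul_left 25) ⟨13 * q ^ 2, rfl⟩
    have hp13 : Prime (13 : ℤ) := by norm_num
    have hnot5 : ¬ (13 : ℤ) ∣ 5 := by norm_num
    rcases hp13.dvd_mul.mp hprod with h1 | h1
    · obtain ⟨a, ha⟩ := h1
      have hb : (13 : ℤ) ∣ 12 * p - 5 * q := by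
        have h5 : (13 : ℤ) ∣ 5 * (12 * p - 5 * q) := ⟨12 * a - 13 * q, by linarith⟩
        rcases hp13.dvd_mul.mp h5 with h | h
        · exact absurd h hnot5
        · exact h
      obtain ⟨b, hb⟩ := hb
      refine ⟨a, b, ?_, ?_, ?_, ?_⟩
      · have key : 169 * (a ^ 2 + b ^ 2) = 169 * (p ^ 2 + q ^ 2) := by
          calc 169 * (a ^ 2 + b ^ 2) = (13 * a) ^ 2 + (13 * b) ^ 2 := by ring
            _ = (5 * p + 12 * q) ^ 2 + (12 * p - 5 * q) ^ 2 := by rw [ha, hb]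
            _ = 169 * (p ^ 2 + q ^ 2) := by ring
        have : a ^ 2 + b ^ 2 = p ^ 2 + q ^ 2 := by linarith
        rw [hpq, this]
      · rw [Int.odd_iff]; omega
      · rw [Int.odd_iff]; omega
      · intro hab
        have hab4 : a % 4 = b % 4 := hab
        omega
    · obtain ⟨a, ha⟩ := h1
      have hb : (13 : ℤ) ∣ 12 * p + 5 * q := by
        have h5 : (13 : ℤ) ∣ 5 * (12 * p + 5 * q) := ⟨12 * a + 13 * q, by linarith⟩
        rcases hp13.dvd_mul.mp h5 with h | h
        · exact absurd h hnot5
        · exact h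
      obtain ⟨c, hc⟩ := hb
      refine ⟨a, -c, ?_, ?_, ?_, ?_⟩
      · have key : 169 * (a ^ 2 + (-c) ^ 2) = 169 * (p ^ 2 + q ^ 2) := by
          calc 169 * (a ^ 2 + (-c) ^ 2) = (13 * a) ^ 2 + (13 * c) ^ 2 := by ring
            _ = (5 * p - 12 * q) ^ 2 + (12 * p + 5 * q) ^ 2 := by rw [ha, hc]
            _ = 169 * (p ^ 2 + q ^ 2) := by ring
        have : a ^ 2 + (-c) ^ 2 = p ^ 2 + q ^ 2 := by linarith
        rw [hpq, this]
      · rw [Int.odd_iff]; omega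
      · rw [Int.odd_iff]; omega
      · intro hab
        have hab4 : a % 4 = (-c) % 4 := hab
        omega
  · exact ⟨p, q, hpq, ⟨k, hk⟩, ⟨l, hl⟩, hmod⟩
end

section
/- For every non-negative integer m, the integer 8m + 6 can be written as a sum of three squares a² + b² + c² in which b and c are odd and a is congruent to 2 modulo 4. -/
def Rep3 (a b c d e f n : ℤ) : Prop :=
  ∃ x y z : ℤ, n = a*x^2 + b*y^2 + c*z^2 + 2*d*x*y + 2*e*x*z + 2*f*y*z

def det3 (a b c d e f : ℤ) : ℤ := a*b*c + 2*d*e*f - a*f^2 - b*e^2 - c*d^2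

lemma rep_swap12 {a b c d e f n : ℤ} (h : Rep3 a b c d e f n) : Rep3 b a c d f e n := by
  obtain ⟨x, y, z, hx⟩ := h; exact ⟨y, x, z, by linear_combination hx⟩

lemma rep_swap23 {a b c d e f n : ℤ} (h : Rep3 a b c d e f n) : Rep3 a c b e d f n := by
  obtain ⟨x, y, z, hx⟩ := h; exact ⟨x, z, y, by linear_combination hx⟩

lemma rep_shear_b {a b c d e f n : ℤ} (k : ℤ) (h : Rep3 a b c d e f n) :
    Rep3 a (b + 2*d*k + a*k^2) c (d + a*k) e (f + e*k) n := by
  obtain ⟨x, y, z, hx⟩ := h; exact ⟨x - k*y, y, z, by linear_combination hx⟩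

lemma rep_shear23 {a b c d e f n : ℤ} (k : ℤ) (h : Rep3 a b c d e f n) :
    Rep3 a b (c + 2*f*k + b*k^2) d (e + d*k) (f + b*k) n := by
  obtain ⟨x, y, z, hx⟩ := h; exact ⟨x, y - k*z, z, by linear_combination hx⟩

lemma exists_k (d a : ℤ) (ha : 0 < a) : ∃ k : ℤ, -a ≤ 2*(d + a*k) ∧ 2*(d + a*k) ≤ a := by
  refine ⟨if 2 * (d % a) ≤ a then -(d/a) else -(d/a) - 1, ?_, ?_⟩ <;>
  · have h1 := Int.mul_ediv_add_emod d a
    have h2 := Int.emod_nonneg d (ne_of_gt ha)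
    have h3 := Int.emod_lt_of_pos d ha
    split <;> nlinarith

lemma cube_bound (a A : ℤ) (ha : 0 < a) (hA : 0 < A) (h1 : 3*A^2 ≤ 4*a) (h2 : 3*a^2 ≤ 4*A) :
    a = 1 ∧ A = 1 := by
  have h27 : 27*(a*(a*(a*a))) ≤ 64*a := by
    nlinarith [mul_le_mul h2 h2 (by positivity : (0:ℤ) ≤ 3*a^2) (by linarith : (0:ℤ) ≤ 4*A)]
  have ha1 : a = 1 := by
    rcases le_or_gt a 1 with h | h
    · omega
    · exfalso
      nlinarith [mul_nonneg (mul_nonneg ha.le ha.le) (by linarith : (0:ℤ) ≤ a - 2),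
        mul_nonneg (mul_nonneg (mul_nonneg ha.le ha.le) ha.le) (by linarith : (0:ℤ) ≤ a - 2),
        mul_nonneg ha.le (by linarith : (0:ℤ) ≤ a - 2)]
  subst ha1
  constructor
  · rfl
  · nlinarith

lemma main3 (N : ℕ) : ∀ a b c d e f n : ℤ, a + (a*b - d^2) ≤ (N:ℤ) → 0 < a →
    0 < a*b - d^2 → det3 a b c d e f = 1 → Rep3 a b c d e f n →
    ∃ x y z : ℤ, n = x^2 + y^2 + z^2 := by
  induction N with
  | zero => intro a b c d e f n hm ha hA _ _; norm_num at hm; linarith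
  | succ N ih =>
    intro a b c d e f n hm ha hA hdet hrep
    obtain ⟨k, hk1, hk2⟩ := exists_k d a ha
    obtain ⟨b₁, d₁, f₁, hrep₁, hb₁, hd₁, hf₁⟩ :
        ∃ b₁ d₁ f₁, Rep3 a b₁ c d₁ e f₁ n ∧ b₁ = b + 2*d*k + a*k^2 ∧ d₁ = d + a*k ∧
          f₁ = f + e*k := ⟨_, _, _, rep_shear_b k hrep, rfl, rfl, rfl⟩
    have hA₁ : a*b₁ - d₁^2 = a*b - d^2 := by rw [hb₁, hd₁]; ring
    have hdet₁ : det3 a b₁ c d₁ e f₁ = 1 := by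
      rw [hb₁, hd₁, hf₁]; unfold det3 at hdet ⊢; linear_combination hdet
    have hkd1 : -a ≤ 2*d₁ := by rw [hd₁]; linarith
    have hkd2 : 2*d₁ ≤ a := by rw [hd₁]; linarith
    clear hb₁ hf₁ hk1 hk2 hd₁ hdet hrep
    have hbpos : 0 < b₁ := by nlinarith
    by_cases hba : b₁ < a
    · -- swap 1,2 and recurse
      refine ih b₁ a c d₁ f₁ e n ?_ hbpos (by linarith [hA₁]) ?_ (rep_swap12 hrep₁)
      · push_cast at hm ⊢; nlinarith
      · unfold det3 at hdet₁ ⊢; linear_combination hdet₁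
    · have hab : a ≤ b₁ := by linarith
      obtain ⟨k₂, hk3, hk4⟩ := exists_k (a*f₁ - d₁*e) (a*b₁ - d₁^2) (by linarith [hA₁])
      obtain ⟨c₂, e₂, f₂, hrep₂, hc₂, he₂, hf₂⟩ :
          ∃ c₂ e₂ f₂, Rep3 a b₁ c₂ d₁ e₂ f₂ n ∧ c₂ = c + 2*f₁*k₂ + b₁*k₂^2 ∧
            e₂ = e + d₁*k₂ ∧ f₂ = f₁ + b₁*k₂ := ⟨_, _, _, rep_shear23 k₂ hrep₁, rfl, rfl, rfl⟩
      have hdet₂ : det3 a b₁ c₂ d₁ e₂ f₂ = 1 := by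
        rw [hc₂, he₂, hf₂]; unfold det3 at hdet₁ ⊢; linear_combination hdet₁
      have hB2 : a*f₂ - d₁*e₂ = (a*f₁ - d₁*e) + (a*b₁ - d₁^2)*k₂ := by
        rw [he₂, hf₂]; ring
      have hk3' : -(a*b₁ - d₁^2) ≤ 2*(a*f₂ - d₁*e₂) := by rw [hB2]; linarith
      have hk4' : 2*(a*f₂ - d₁*e₂) ≤ a*b₁ - d₁^2 := by rw [hB2]; linarith
      clear hc₂ he₂ hf₂ hk3 hk4 hB2 hrep₁ hdet₁
      have hApos : 0 < a*b₁ - d₁^2 := by linarith [hA₁]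
      have hdetv : (a*b₁ - d₁^2) * (a*c₂ - e₂^2) = (a*f₂ - d₁*e₂)^2 + a := by
        unfold det3 at hdet₂; linear_combination a * hdet₂
      have hC2pos : 0 < a*c₂ - e₂^2 := by nlinarith [sq_nonneg (a*f₂ - d₁*e₂)]
      by_cases hCA : a*c₂ - e₂^2 < a*b₁ - d₁^2
      · refine ih a c₂ b₁ e₂ d₁ f₂ n ?_ ha hC2pos ?_ (rep_swap23 hrep₂)
        · push_cast at hm ⊢; nlinarith
        · unfold det3 at hdet₂ ⊢; linear_combination hdet₂
      · have hAC : a*b₁ - d₁^2 ≤ a*c₂ - e₂^2 := by linarith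
        obtain ⟨A, hAdef⟩ : ∃ A, a*b₁ - d₁^2 = A := ⟨_, rfl⟩
        obtain ⟨B, hBdef⟩ : ∃ B, a*f₂ - d₁*e₂ = B := ⟨_, rfl⟩
        obtain ⟨C, hCdef⟩ : ∃ C, a*c₂ - e₂^2 = C := ⟨_, rfl⟩
        rw [hAdef, hBdef] at hk3' hk4'
        rw [hAdef, hCdef, hBdef] at hdetv
        rw [hAdef] at hApos
        rw [hCdef] at hC2pos
        rw [hAdef, hCdef] at hAC
        have hsq : 4*B^2 ≤ A^2 := by nlinarith [mul_nonneg (by linarith : (0:ℤ) ≤ A + 2*B) (by linarith : (0:ℤ) ≤ A - 2*B)]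
        have h3A : 3*A^2 ≤ 4*a := by nlinarith [mul_le_mul_of_nonneg_left hAC (le_of_lt hApos)]
        have h4A : 3*a^2 ≤ 4*A := by
          rw [← hAdef]
          nlinarith [mul_le_mul_of_nonneg_left hab (le_of_lt ha),
            mul_nonneg (by linarith : (0:ℤ) ≤ a + 2*d₁) (by linarith : (0:ℤ) ≤ a - 2*d₁)]
        obtain ⟨ha1, hAv⟩ := cube_bound a A ha hApos h3A h4A
        subst ha1
        subst hAv
        have hd0 : d₁ = 0 := by omega
        subst hd0
        have hB0 : B = 0 := by omega
        rw [hB0] at hBdef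
        have hb1 : b₁ = 1 := by linear_combination hAdef
        subst hb1
        have hf0 : f₂ = 0 := by linear_combination hBdef
        subst hf0
        have hc2 : c₂ = 1 + e₂^2 := by linear_combination hCdef + hdetv + B * hB0
        subst hc2
        obtain ⟨x, y, z, hxyz⟩ := hrep₂
        exact ⟨x + e₂*z, y, z, by linear_combination hxyz⟩

theorem key_sum (m : ℕ) : ∃ x y z : ℤ, (8*m+6 : ℤ) = x^2 + y^2 + z^2 := by
  have hq : (0:ℕ) < 8*(4*m+3) := by omega
  haveI : NeZero (8*(4*m+3)) := ⟨by omega⟩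
  have hunit : IsUnit (((8*m+5 : ℕ)) : ZMod (8*(4*m+3))) := by
    rw [ZMod.isUnit_iff_coprime]
    rw [← Nat.isCoprime_iff_coprime]
    exact ⟨8*m+5, -(2*m+1), by push_cast; ring⟩
  obtain ⟨p, hpg, hpp, hpmod⟩ := Nat.forall_exists_prime_gt_and_eq_mod hunit (8*(4*m+3))
  haveI : Fact p.Prime := ⟨hpp⟩
  have hmeq : p ≡ 8*m+5 [MOD 8*(4*m+3)] := (ZMod.natCast_eq_natCast_iff _ _ _).mp hpmod
  have h8 : p % 8 = 5 := by
    have h := hmeq.of_dvd (⟨4*m+3, rfl⟩ : (8:ℕ) ∣ 8*(4*m+3))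
    unfold Nat.ModEq at h; omega
  have hqmod : p % (4*m+3) = 4*m+2 := by
    have h := hmeq.of_dvd (⟨8, by ring⟩ : (4*m+3:ℕ) ∣ 8*(4*m+3))
    unfold Nat.ModEq at h
    have h2 : (8*m+5) % (4*m+3) = 4*m+2 := by
      have : 8*m+5 = (4*m+3) + (4*m+2) := by ring
      rw [this, Nat.add_mod_left, Nat.mod_eq_of_lt (by omega)]
    omega
  have hoq : Odd (4*m+3) := by rw [Nat.odd_iff]; omega
  have hop : Odd p := hpp.odd_of_ne_two (by omega)
  have hp4 : p % 4 = 1 := by omega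
  -- 8m+6 divides p+1
  have hdvd : ∃ t : ℤ, (p:ℤ) + 1 = (8*m+6) * t := by
    obtain ⟨t, ht⟩ := hmeq.dvd
    exact ⟨1 - 4*t, by push_cast at ht ⊢; linear_combination -ht⟩
  obtain ⟨t, ht⟩ := hdvd
  -- Jacobi symbol computation
  have j1 : jacobiSym (-1) p = 1 := by
    rw [jacobiSym.at_neg_one hop, ZMod.χ₄_nat_one_mod_four hp4]
  have j2 : jacobiSym 2 p = -1 := by
    rw [jacobiSym.at_two hop, ZMod.χ₈_nat_mod_eight, h8]; decide
  have j3 : jacobiSym ((4*m+3 : ℕ) : ℤ) p = -1 := by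
    rw [← jacobiSym.quadratic_reciprocity_one_mod_four hp4 hoq]
    have hml : ((p:ℕ) : ℤ) % ((4*m+3 : ℕ) : ℤ) = (-1 : ℤ) % ((4*m+3 : ℕ) : ℤ) := by
      have h1 : ((p:ℕ) : ℤ) % ((4*m+3 : ℕ) : ℤ) = ((4*m+2 : ℕ) : ℤ) := by
        rw [← Int.natCast_mod, hqmod]
      have h2 : (-1 : ℤ) % ((4*m+3 : ℕ) : ℤ) = ((4*m+2 : ℕ) : ℤ) := by
        have e1 : (-1 : ℤ) = ((4*m+2 : ℕ) : ℤ) + ((4*m+3 : ℕ) : ℤ) * (-1) := by push_cast; ring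
        rw [e1, Int.add_mul_emod_self_left, Int.emod_eq_of_lt (by positivity) (by push_cast; omega)]
      rw [h1, h2]
    rw [jacobiSym.mod_left' hml, jacobiSym.at_neg_one hoq, ZMod.χ₄_nat_three_mod_four (by omega)]
  have hfact : (-(8*m+6) : ℤ) = (-1) * 2 * ((4*m+3 : ℕ) : ℤ) := by push_cast; ring
  have hleg : legendreSym p (-(8*m+6)) = 1 := by
    rw [jacobiSym.legendreSym.to_jacobiSym, hfact, jacobiSym.mul_left, jacobiSym.mul_left, j1, j2, j3]
    ring
  have hne : (((-(8*m+6) : ℤ)) : ZMod p) ≠ 0 := by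
    rw [Ne, ZMod.intCast_zmod_eq_zero_iff_dvd, Int.dvd_neg]
    intro hdvd
    have h1 : ((8*m+6 : ℤ)) = ((8*m+6 : ℕ) : ℤ) := by push_cast; ring
    rw [h1, Int.natCast_dvd_natCast] at hdvd
    have := Nat.le_of_dvd (by omega) hdvd
    omega
  obtain ⟨s, hs⟩ := (legendreSym.eq_one_iff p hne).mp hleg
  -- e with p ∣ e² + (8m+6)
  obtain ⟨e, he⟩ : ∃ e : ℤ, ((e^2 + (8*m+6) : ℤ) : ZMod p) = 0 := by
    refine ⟨(s.val : ℤ), ?_⟩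
    push_cast
    rw [ZMod.natCast_rightInverse s]
    rw [show ((8:ZMod p)*(m:ℕ)+6 : ZMod p) = -(((-(8*m+6) : ℤ)) : ZMod p) by push_cast; ring, hs]
    ring
  rw [ZMod.intCast_zmod_eq_zero_iff_dvd] at he
  obtain ⟨f, hf⟩ := he
  -- c with p*c = 1 + e + (8m+6)*k
  obtain ⟨c, k, hc⟩ : ∃ c k : ℤ, (p:ℤ)*c = 1 + e + (8*m+6)*k := by
    refine ⟨-(1+e), -((1+e)*t), ?_⟩
    linear_combination (-(1+e)) * ht
  -- n divides g'+1
  have hPg : (p:ℤ) * (f - 2*e*c + (p:ℤ)*c^2 + 1) =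
      (8*m+6) * (1 + t + 2*k + (8*m+6)*k^2) := by
    linear_combination (-1)*hf + ht + ((p:ℤ)*c + 1 - e + (8*m+6)*k) * hc
  obtain ⟨a0, ha0⟩ : ∃ a0 : ℤ, f - 2*e*c + (p:ℤ)*c^2 + 1 = (8*m+6) * a0 :=
    ⟨t*(f - 2*e*c + (p:ℤ)*c^2 + 1) - (1 + t + 2*k + (8*m+6)*k^2),
      by linear_combination (f - 2*e*c + (p:ℤ)*c^2 + 1)*ht - hPg⟩
  have hppos : (0:ℤ) < (p:ℕ) := by exact_mod_cast hpp.pos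
  have hCA : (p:ℤ)*f - e^2 = (8*m+6:ℤ) := by linear_combination -hf
  have hfpos : (0:ℤ) < f := by
    by_contra hcon
    push_neg at hcon
    nlinarith [mul_nonpos_of_nonneg_of_nonpos hppos.le hcon, sq_nonneg e]
  have hDB : a0*((p:ℤ)*f - e^2) - (f - e*c) + c*(e - (p:ℤ)*c) = 1 := by
    linear_combination a0*hCA - ha0
  have hid : ((p:ℤ)*f - e^2)*(a0*f - c^2) - (c*e - f)^2 = f := by
    linear_combination f * hDB
  have hCApos : (0:ℤ) < (p:ℤ)*f - e^2 := by rw [hCA]; positivity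
  have hdet : ((p:ℤ)*f - e^2)*(a0*f - c^2)*(a0*(p:ℤ) - 1)
      + 2*(c*e - f)*(e - (p:ℤ)*c)*(c - a0*e)
      - ((p:ℤ)*f - e^2)*(c - a0*e)^2 - (a0*f - c^2)*(e - (p:ℤ)*c)^2
      - (a0*(p:ℤ) - 1)*(c*e - f)^2 = 1 := by
    linear_combination (a0*((p:ℤ)*f - e^2) - (f - e*c) + c*(e - (p:ℤ)*c) + 1) * hDB
  refine main3 ((((p:ℤ)*f - e^2) + (((p:ℤ)*f - e^2)*(a0*f - c^2) - (c*e - f)^2)).toNat)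
    ((p:ℤ)*f - e^2) (a0*f - c^2) (a0*(p:ℤ) - 1) (c*e - f) (e - (p:ℤ)*c) (c - a0*e)
    (8*m+6) (Int.self_le_toNat _) hCApos (by rw [hid]; exact hfpos) (by unfold det3; exact hdet)
    ⟨1, 0, 0, by linear_combination (-1) * hCA⟩

lemma sq_mod8 (u : ℕ) : u^2 % 8 = 0 ∨ (u^2 % 8 = 1 ∧ u % 2 = 1) ∨ (u^2 % 8 = 4 ∧ u % 4 = 2) := by
  have h := Nat.div_add_mod u 4
  have key : u^2 = 8*(2*(u/4)*(u/4) + (u/4)*(u%4)) + (u%4)^2 := by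
    conv_lhs => rw [← h]
    ring
  have h4 : u % 4 = 0 ∨ u % 4 = 1 ∨ u % 4 = 2 ∨ u % 4 = 3 := by omega
  have h2 : u % 2 = u % 4 % 2 := (Nat.mod_mod_of_dvd u (by norm_num)).symm
  rcases h4 with h4 | h4 | h4 | h4 <;> rw [h4] at key <;>
    rw [key, Nat.mul_add_mod] <;> [left; (right; left); (right; right); (right; left)] <;>
    simp <;> omega
theorem stmt_16 (m : ℕ) :
    ∃ a b c : ℕ, 8 * m + 6 = a ^ 2 + b ^ 2 + c ^ 2 ∧ Odd b ∧ Odd c ∧ a % 4 = 2 := by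
  have key : ∃ x y z : ℤ, (8*m+6 : ℤ) = x^2 + y^2 + z^2 := key_sum m
  obtain ⟨x, y, z, hxyz⟩ := key
  have hN : x.natAbs^2 + y.natAbs^2 + z.natAbs^2 = 8*m+6 := by
    have : ((x.natAbs^2 + y.natAbs^2 + z.natAbs^2 : ℕ) : ℤ) = ((8*m+6 : ℕ) : ℤ) := by
      push_cast
      rw [sq_abs, sq_abs, sq_abs]
      linarith [hxyz]
    exact_mod_cast this
  obtain ⟨X, hX⟩ : ∃ X, x.natAbs = X := ⟨_, rfl⟩
  obtain ⟨Y, hY⟩ : ∃ Y, y.natAbs = Y := ⟨_, rfl⟩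
  obtain ⟨Z, hZ⟩ : ∃ Z, z.natAbs = Z := ⟨_, rfl⟩
  rw [hX, hY, hZ] at hN
  have PX := sq_mod8 X
  have PY := sq_mod8 Y
  have PZ := sq_mod8 Z
  have hN' := hN
  obtain ⟨sX, hsX⟩ : ∃ s, X^2 = s := ⟨_, rfl⟩
  obtain ⟨sY, hsY⟩ : ∃ s, Y^2 = s := ⟨_, rfl⟩
  obtain ⟨sZ, hsZ⟩ : ∃ s, Z^2 = s := ⟨_, rfl⟩
  rw [hsX, hsY, hsZ] at hN
  rw [hsX] at PX; rw [hsY] at PY; rw [hsZ] at PZ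
  have big : (X % 4 = 2 ∧ Y % 2 = 1 ∧ Z % 2 = 1) ∨
      (Y % 4 = 2 ∧ X % 2 = 1 ∧ Z % 2 = 1) ∨
      (Z % 4 = 2 ∧ X % 2 = 1 ∧ Y % 2 = 1) := by omega
  rcases big with ⟨h1, h2, h3⟩ | ⟨h1, h2, h3⟩ | ⟨h1, h2, h3⟩
  · exact ⟨X, Y, Z, by linarith [hN'], Nat.odd_iff.mpr h2,
      Nat.odd_iff.mpr h3, h1⟩
  · exact ⟨Y, X, Z, by linarith [hN'], Nat.odd_iff.mpr h2,
      Nat.odd_iff.mpr h3, h1⟩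
  · exact ⟨Z, X, Y, by linarith [hN'], Nat.odd_iff.mpr h2,
      Nat.odd_iff.mpr h3, h1⟩
end

section
/- For every non-negative integer m, the integer 4m + 2 can be written as a sum of three squares a² + b² + c² in which a is odd and b, c have different parity. -/
/-- Davenport–Cassels descent for sums of three squares. -/
lemma dc_descent (n : ℤ) : ∀ t : ℕ, t ≠ 0 → ∀ x y z : ℤ,
    x ^ 2 + y ^ 2 + z ^ 2 = n * (t : ℤ) ^ 2 → ∃ a b c : ℤ, a ^ 2 + b ^ 2 + c ^ 2 = n := by
  intro t
  induction t using Nat.strong_induction_on with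
  | _ t IH =>
    intro ht x y z hrep
    set T : ℤ := (t : ℤ) with hT
    have hT0 : 0 < T := by
      rw [hT]
      exact_mod_cast Nat.pos_of_ne_zero ht
    -- rounding
    have round : ∀ w : ℤ, ∃ a : ℤ, (2 * (w - T * a)) ^ 2 ≤ T ^ 2 := by
      intro w
      refine ⟨(2 * w + T) / (2 * T), ?_⟩
      have h2T : 0 < 2 * T := by linarith
      have hmod₁ : 0 ≤ (2 * w + T) % (2 * T) := Int.emod_nonneg _ (by positivity)
      have hmod₂ : (2 * w + T) % (2 * T) < 2 * T := Int.emod_lt_of_pos _ h2T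
      have hdm : 2 * T * ((2 * w + T) / (2 * T)) + (2 * w + T) % (2 * T) = 2 * w + T :=
        Int.mul_ediv_add_emod _ _
      nlinarith [sq_nonneg ((2 * w + T) % (2 * T))]
    obtain ⟨a₁, ha₁⟩ := round x
    obtain ⟨a₂, ha₂⟩ := round y
    obtain ⟨a₃, ha₃⟩ := round z
    set A : ℤ := a₁ ^ 2 + a₂ ^ 2 + a₃ ^ 2 with hA
    set σ : ℤ := a₁ * x + a₂ * y + a₃ * z with hσ
    set R : ℤ := (x - T * a₁) ^ 2 + (y - T * a₂) ^ 2 + (z - T * a₃) ^ 2 with hR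
    have hRval : R = n * T ^ 2 - 2 * T * σ + T ^ 2 * A := by
      rw [hR, hσ, hA]; linear_combination hrep
    have hRlt : 4 * R ≤ 3 * T ^ 2 := by rw [hR]; nlinarith [ha₁, ha₂, ha₃]
    have hR0 : 0 ≤ R := by positivity
    set t' : ℤ := n * T + T * A - 2 * σ with ht'
    have hTt' : T * t' = R := by rw [ht', hRval]; ring
    by_cases h0 : t' = 0
    · -- R = 0, exact representation
      have hRz : R = 0 := by rw [← hTt', h0]; ring
      rw [hR] at hRz
      have s1 := sq_nonneg (x - T * a₁)
      have s2 := sq_nonneg (y - T * a₂)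
      have s3 := sq_nonneg (z - T * a₃)
      have e1 : (x - T * a₁) ^ 2 = 0 := by linarith
      have e2 : (y - T * a₂) ^ 2 = 0 := by linarith
      have e3 : (z - T * a₃) ^ 2 = 0 := by linarith
      have hx : x = T * a₁ := by have := pow_eq_zero_iff (n := 2) (by norm_num) |>.mp e1; linarith
      have hy : y = T * a₂ := by have := pow_eq_zero_iff (n := 2) (by norm_num) |>.mp e2; linarith
      have hz : z = T * a₃ := by have := pow_eq_zero_iff (n := 2) (by norm_num) |>.mp e3; linarith
      refine ⟨a₁, a₂, a₃, ?_⟩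
      have hT2 : T ^ 2 ≠ 0 := by positivity
      rw [hx, hy, hz] at hrep
      have key : T ^ 2 * (a₁ ^ 2 + a₂ ^ 2 + a₃ ^ 2) = T ^ 2 * n := by linear_combination hrep
      exact mul_left_cancel₀ hT2 key
    · have ht'pos : 0 < t' := by
        rcases lt_trichotomy t' 0 with h | h | h
        · exfalso; nlinarith
        · exact absurd h h0
        · exact h
      have ht'lt : t' < T := by nlinarith
      -- new representation with denominator t'
      set Y₁ : ℤ := (A - n) * x + 2 * (n * T - σ) * a₁ with hY₁
      set Y₂ : ℤ := (A - n) * y + 2 * (n * T - σ) * a₂ with hY₂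
      set Y₃ : ℤ := (A - n) * z + 2 * (n * T - σ) * a₃ with hY₃
      have hnew : Y₁ ^ 2 + Y₂ ^ 2 + Y₃ ^ 2 = n * t' ^ 2 := by
        rw [hY₁, hY₂, hY₃, ht', hA, hσ]
        linear_combination (a₁ ^ 2 + a₂ ^ 2 + a₃ ^ 2 - n) ^ 2 * hrep
      have ht'nat : ((t'.toNat : ℤ)) = t' := Int.toNat_of_nonneg ht'pos.le
      have hlt : t'.toNat < t := by
        have : (t'.toNat : ℤ) < (t : ℤ) := by rw [ht'nat]; exact ht'lt
        exact_mod_cast this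
      have hne : t'.toNat ≠ 0 := by
        intro h
        rw [h] at ht'nat; simp at ht'nat; omega
      exact IH t'.toNat hlt hne Y₁ Y₂ Y₃ (by rw [ht'nat]; exact hnew)


lemma pigeon (M : ℕ) (hM : 0 < M) (β γ : ℤ) (X Y Z : ℕ)
    (hcard : M < (X + 1) * (Y + 1) * (Z + 1)) :
    ∃ x y z : ℤ, ¬(x = 0 ∧ y = 0 ∧ z = 0) ∧
      -(X : ℤ) ≤ x ∧ x ≤ X ∧ -(Y : ℤ) ≤ y ∧ y ≤ Y ∧ -(Z : ℤ) ≤ z ∧ z ≤ Z ∧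
      (M : ℤ) ∣ x + β * y + γ * z := by
  haveI : NeZero M := ⟨hM.ne'⟩
  set f : Fin (X + 1) × Fin (Y + 1) × Fin (Z + 1) → ZMod M :=
    fun t => (((t.1.1 : ℤ) + β * (t.2.1.1 : ℤ) + γ * (t.2.2.1 : ℤ) : ℤ) : ZMod M) with hf
  have hclt : Fintype.card (ZMod M) < Fintype.card (Fin (X + 1) × Fin (Y + 1) × Fin (Z + 1)) := by
    simp [ZMod.card, Fintype.card_prod]
    calc M < (X + 1) * (Y + 1) * (Z + 1) := hcard
    _ = (X + 1) * ((Y + 1) * (Z + 1)) := by ring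
  obtain ⟨s, u, hsu, hfeq⟩ := Fintype.exists_ne_map_eq_of_card_lt f hclt
  refine ⟨(s.1.1 : ℤ) - u.1.1, (s.2.1.1 : ℤ) - u.2.1.1, (s.2.2.1 : ℤ) - u.2.2.1, ?_, ?_, ?_, ?_, ?_, ?_, ?_, ?_⟩
  · rintro ⟨h1, h2, h3⟩
    apply hsu
    have e1 : s.1 = u.1 := Fin.ext (by omega)
    have e2 : s.2.1 = u.2.1 := Fin.ext (by omega)
    have e3 : s.2.2 = u.2.2 := Fin.ext (by omega)
    exact Prod.ext e1 (Prod.ext e2 e3)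
  · have := s.1.isLt; have := u.1.isLt; omega
  · have := s.1.isLt; have := u.1.isLt; omega
  · have := s.2.1.isLt; have := u.2.1.isLt; omega
  · have := s.2.1.isLt; have := u.2.1.isLt; omega
  · have := s.2.2.isLt; have := u.2.2.isLt; omega
  · have := s.2.2.isLt; have := u.2.2.isLt; omega
  · rw [← ZMod.intCast_zmod_eq_zero_iff_dvd]
    push_cast
    rw [hf] at hfeq
    simp only at hfeq
    have : ((((s.1.1 : ℤ) + β * (s.2.1.1 : ℤ) + γ * (s.2.2.1 : ℤ) : ℤ) : ZMod M))
         - ((((u.1.1 : ℤ) + β * (u.2.1.1 : ℤ) + γ * (u.2.2.1 : ℤ) : ℤ) : ZMod M)) = 0 := by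
      rw [hfeq]; ring
    push_cast at this
    linear_combination this


lemma aux_prime_core (u c : ℕ) (hu : u % 2 = 1) (hcodd : c % 2 = 1)
    (hcu : u ∣ c + 1)
    (hsign : (c % 8 = 1 ∧ u % 4 = 1) ∨ (c % 8 = 5 ∧ u % 4 = 3)) :
    ∃ p : ℕ, p.Prime ∧ 8 * u < p ∧ p % 4 = 1 ∧ u ∣ p + 1 ∧
      IsSquare ((2 * u : ℕ) : ZMod p) := by
  have hu0 : 0 < u := Nat.pos_of_ne_zero (by omega)
  have hcop : Nat.Coprime c (8 * u) := by
    have h2 : Nat.Coprime c 2 :=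
      ((Nat.Prime.coprime_iff_not_dvd Nat.prime_two).mpr (by omega)).symm
    have h8 : Nat.Coprime c 8 := by
      have : (8 : ℕ) = 2 ^ 3 := by norm_num
      rw [this]
      exact Nat.Coprime.pow_right 3 h2
    have hcu' : Nat.Coprime c u := by
      obtain ⟨k, hk⟩ := hcu
      have d1 : Nat.gcd c u ∣ c := Nat.gcd_dvd_left c u
      have d2 : Nat.gcd c u ∣ u := Nat.gcd_dvd_right c u
      have d3 : Nat.gcd c u ∣ c + 1 := d2.trans ⟨k, hk⟩
      have h1 : Nat.gcd c u ∣ 1 := by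
        have := Nat.dvd_sub d3 d1
        simpa using this
      exact Nat.eq_one_of_dvd_one h1
    exact Nat.Coprime.mul_right h8 hcu'
  haveI : NeZero (8 * u) := ⟨by omega⟩
  have hunit : IsUnit ((c : ℕ) : ZMod (8 * u)) := (ZMod.isUnit_iff_coprime c (8 * u)).mpr hcop
  obtain ⟨p, hgt, hp, hpc⟩ := Nat.forall_exists_prime_gt_and_eq_mod hunit (8 * u)
  haveI : Fact p.Prime := ⟨hp⟩
  have hmod : p % (8 * u) = c % (8 * u) := (ZMod.natCast_eq_natCast_iff' p c (8 * u)).mp hpc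
  have hp8 : p % 8 = c % 8 := by
    have h1 : p % (8 * u) % 8 = p % 8 := Nat.mod_mod_of_dvd p ⟨u, rfl⟩
    have h2 : c % (8 * u) % 8 = c % 8 := Nat.mod_mod_of_dvd c ⟨u, rfl⟩
    rw [← h1, hmod, h2]
  have hpu : u ∣ p + 1 := by
    have h1 : p % (8 * u) % u = p % u := Nat.mod_mod_of_dvd p ⟨8, by ring⟩
    have h2 : c % (8 * u) % u = c % u := Nat.mod_mod_of_dvd c ⟨8, by ring⟩
    have hpcu : p % u = c % u := by rw [← h1, hmod, h2]
    have h3 : (p + 1) ≡ (c + 1) [MOD u] := Nat.ModEq.add_right 1 hpcu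
    have h4 : (c + 1) ≡ 0 [MOD u] := (Nat.modEq_zero_iff_dvd).mpr hcu
    exact (Nat.modEq_zero_iff_dvd).mp (h3.trans h4)
  have hp8v : (p % 8 = 1 ∧ u % 4 = 1) ∨ (p % 8 = 5 ∧ u % 4 = 3) := by
    rcases hsign with ⟨h1, h2⟩ | ⟨h1, h2⟩
    · exact Or.inl ⟨by omega, h2⟩
    · exact Or.inr ⟨by omega, h2⟩
  have hp4 : p % 4 = 1 := by
    rcases hp8v with ⟨h1, _⟩ | ⟨h1, _⟩ <;> omega
  have hpodd : Odd p := by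
    rcases hp8v with ⟨h1, _⟩ | ⟨h1, _⟩ <;> exact Nat.odd_iff.mpr (by omega)
  refine ⟨p, hp, hgt, hp4, hpu, ?_⟩
  have hne : ((2 * u : ℕ) : ZMod p) ≠ 0 := by
    rw [Ne, ZMod.natCast_eq_zero_iff]
    intro hdvd
    have := Nat.le_of_dvd (by omega) hdvd
    omega
  have hleg : legendreSym p ((2 * u : ℕ) : ℤ) = 1 := by
    rw [jacobiSym.legendreSym.to_jacobiSym]
    have e1 : ((2 * u : ℕ) : ℤ) = (2 : ℤ) * ((u : ℕ) : ℤ) := by push_cast; ring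
    rw [e1, jacobiSym.mul_left]
    have h2 : jacobiSym (2 : ℤ) p = ZMod.χ₈ p := jacobiSym.at_two hpodd
    have hu' : Odd u := Nat.odd_iff.mpr hu
    have h3 : jacobiSym ((u : ℕ) : ℤ) p = jacobiSym ((p : ℕ) : ℤ) u :=
      jacobiSym.quadratic_reciprocity_one_mod_four' hu' hp4
    have h4 : jacobiSym ((p : ℕ) : ℤ) u = jacobiSym (-1 : ℤ) u := by
      apply jacobiSym.mod_left'
      obtain ⟨k, hk⟩ := hpu
      have hpk : (p : ℤ) = -1 + u * k := by push_cast; omega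
      rw [hpk]
      simp [Int.add_mul_emod_self_left]
    have h5 : jacobiSym (-1 : ℤ) u = ZMod.χ₄ u := jacobiSym.at_neg_one hu'
    rw [h2, h3, h4, h5]
    rcases hp8v with ⟨h6, h7⟩ | ⟨h6, h7⟩
    · rw [ZMod.χ₈_nat_mod_eight, h6, ZMod.χ₄_nat_mod_four, h7]; decide
    · rw [ZMod.χ₈_nat_mod_eight, h6, ZMod.χ₄_nat_mod_four, h7]; decide
  have := (legendreSym.eq_one_iff p (by exact_mod_cast hne)).mp hleg
  simpa using this

lemma aux_prime (u : ℕ) (hu : u % 2 = 1) :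
    ∃ p : ℕ, p.Prime ∧ 8 * u < p ∧ p % 4 = 1 ∧ u ∣ p + 1 ∧
      IsSquare ((2 * u : ℕ) : ZMod p) := by
  have hu0 : 0 < u := Nat.pos_of_ne_zero (by omega)
  have hsq : ∃ j, u ^ 2 = 8 * j + 1 := by
    obtain ⟨k, hk⟩ : ∃ k, u = 2 * k + 1 := ⟨u / 2, by omega⟩
    obtain ⟨j, hj⟩ := Nat.even_mul_succ_self k
    refine ⟨j, ?_⟩
    have : u ^ 2 = 4 * (k * (k + 1)) + 1 := by rw [hk]; ring
    omega
  obtain ⟨j, hj⟩ := hsq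
  have hu2pos : 1 ≤ u ^ 2 := by omega
  rcases Nat.lt_or_ge (u % 4) 2 with h | h
  · have hu4 : u % 4 = 1 := by omega
    apply aux_prime_core u (2 * u ^ 2 - 1) hu (by omega) ?_ (Or.inl ⟨by omega, hu4⟩)
    have : 2 * u ^ 2 - 1 + 1 = u * (2 * u) := by
      have h2 : u * (2 * u) = 2 * u ^ 2 := by ring
      omega
    rw [this]
    exact ⟨2 * u, rfl⟩
  · have hu4 : u % 4 = 3 := by omega
    apply aux_prime_core u (6 * u ^ 2 - 1) hu (by omega) ?_ (Or.inr ⟨by omega, hu4⟩)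
    have : 6 * u ^ 2 - 1 + 1 = u * (6 * u) := by
      have h2 : u * (6 * u) = 6 * u ^ 2 := by ring
      omega
    rw [this]
    exact ⟨6 * u, rfl⟩




lemma isotropic (u : ℕ) (hu : u % 2 = 1) (hns : ∀ k : ℕ, k ^ 2 ≠ 2 * u) :
    ∃ X₁ Y₁ Z₁ : ℤ, ∃ p : ℕ, p.Prime ∧ p % 4 = 1 ∧
      X₁ ^ 2 + (p : ℤ) * Y₁ ^ 2 = 2 * (u : ℤ) * Z₁ ^ 2 ∧ Z₁ ≠ 0 := by
  have hu0 : 0 < u := Nat.pos_of_ne_zero (by omega)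
  obtain ⟨p, hp, hgt, hp4, hpu, hsq⟩ := aux_prime u hu
  haveI : Fact p.Prime := ⟨hp⟩
  have hp0 : 0 < p := hp.pos
  have hp2 : 2 ≤ p := hp.two_le
  obtain ⟨r, hr⟩ := hsq
  have hr' : (2 : ZMod p) * (u : ZMod p) = r * r := by push_cast at hr; exact hr
  obtain ⟨h, hrr⟩ : ∃ h : ℕ, ((h : ℕ) : ZMod p) = r :=
    ⟨r.val, by rw [ZMod.natCast_val, ZMod.cast_id]⟩
  -- Bezout
  have hpnd : ¬ p ∣ 2 * u := fun hd => by have := Nat.le_of_dvd (by omega) hd; omega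
  have hcop : Nat.Coprime (2 * u) p := (hp.coprime_iff_not_dvd.mpr hpnd).symm
  have hicop : IsCoprime ((2 * u : ℕ) : ℤ) ((p : ℕ) : ℤ) := by
    rw [Nat.isCoprime_iff_coprime]; exact hcop
  obtain ⟨e, f, hef⟩ := id hicop
  have hef' : e * (2 * (u : ℤ)) + f * p = 1 := by push_cast at hef; linarith
  set β : ℤ := f * p with hβ
  set γ : ℤ := (h : ℤ) * e * (2 * u) with hγ
  have hβp : (p : ℤ) ∣ β := ⟨f, mul_comm f p⟩
  have hβn : (2 * (u : ℤ)) ∣ β - 1 := ⟨-e, by linarith [hef']⟩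
  have hγn : (2 * (u : ℤ)) ∣ γ := ⟨(h : ℤ) * e, by rw [hγ]; ring⟩
  have hγp : (p : ℤ) ∣ γ - (h : ℤ) := by
    refine ⟨-(h : ℤ) * f, ?_⟩
    have e1 : γ - (h : ℤ) = (h : ℤ) * (e * (2 * u) - 1) := by rw [hγ]; ring
    rw [e1]
    have e2 : e * (2 * (u:ℤ)) - 1 = -(f * p) := by linarith [hef']
    have e3 : e * ((u:ℤ) * 2) - 1 = e * (2 * (u:ℤ)) - 1 := by ring
    nlinarith [hef']
  -- box sizes
  have hXs : (Nat.sqrt (2 * u * p)) ^ 2 ≤ 2 * u * p := Nat.sqrt_le' _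
  have hYs : (Nat.sqrt (2 * u)) ^ 2 ≤ 2 * u := Nat.sqrt_le' _
  have hZs : (Nat.sqrt p) ^ 2 ≤ p := Nat.sqrt_le' _
  have hX1 : 2 * u * p < (Nat.sqrt (2 * u * p) + 1) ^ 2 := Nat.lt_succ_sqrt' _
  have hY1 : 2 * u < (Nat.sqrt (2 * u) + 1) ^ 2 := Nat.lt_succ_sqrt' _
  have hZ1 : p < (Nat.sqrt p + 1) ^ 2 := Nat.lt_succ_sqrt' _
  set X : ℕ := Nat.sqrt (2 * u * p)
  set Y : ℕ := Nat.sqrt (2 * u)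
  set Z : ℕ := Nat.sqrt p
  have hcard : 2 * u * p < (X + 1) * (Y + 1) * (Z + 1) := by
    have hsq2 : (2 * u * p) ^ 2 < ((X + 1) * (Y + 1) * (Z + 1)) ^ 2 := by
      have e1 : ((X + 1) * (Y + 1) * (Z + 1)) ^ 2 = (X + 1) ^ 2 * ((Y + 1) ^ 2 * (Z + 1) ^ 2) := by
        ring
      have e2 : (2 * u * p) ^ 2 = (2 * u * p) * ((2 * u) * p) := by ring
      rw [e1, e2]
      exact Nat.mul_lt_mul_of_lt_of_lt hX1 (Nat.mul_lt_mul_of_lt_of_lt hY1 hZ1)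
    exact lt_of_pow_lt_pow_left₀ 2 (by positivity) hsq2
  obtain ⟨x, y, z, hnz, hx1, hx2, hy1, hy2, hz1, hz2, hdvdL⟩ :=
    pigeon (2 * u * p) (by positivity) β γ X Y Z hcard
  -- divisibility of val
  have hMc : ((2 * u * p : ℕ) : ℤ) = 2 * (u : ℤ) * p := by push_cast; ring
  have hpval : (p : ℤ) ∣ x ^ 2 + (p : ℤ) * y ^ 2 - 2 * (u : ℤ) * z ^ 2 := by
    rw [← ZMod.intCast_zmod_eq_zero_iff_dvd]
    have hLp : (p : ℤ) ∣ x + β * y + γ * z := by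
      refine dvd_trans ?_ hdvdL
      rw [hMc]; exact ⟨2 * u, by ring⟩
    have e0 : ((x + β * y + γ * z : ℤ) : ZMod p) = 0 :=
      (ZMod.intCast_zmod_eq_zero_iff_dvd _ _).mpr hLp
    have eβ : ((β : ℤ) : ZMod p) = 0 := (ZMod.intCast_zmod_eq_zero_iff_dvd _ _).mpr hβp
    have eγ : ((γ : ℤ) : ZMod p) = (h : ZMod p) := by
      have e2 := (ZMod.intCast_zmod_eq_zero_iff_dvd (γ - (h : ℤ)) p).mpr hγp
      push_cast at e2 ⊢
      linear_combination e2
    push_cast at e0 ⊢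
    rw [eβ] at e0
    have ex : (x : ZMod p) = -((h : ZMod p) * (z : ZMod p)) := by
      push_cast at eγ
      linear_combination e0 - (z : ZMod p) * eγ
    have hpz : ((p : ℕ) : ZMod p) = 0 := ZMod.natCast_self p
    have hhr : (h : ZMod p) ^ 2 = 2 * (u : ZMod p) := by
      rw [hrr]; rw [sq]; exact hr'.symm
    rw [ex, hpz]
    linear_combination (z : ZMod p) ^ 2 * hhr
  have hnval : ((2 * u : ℕ) : ℤ) ∣ x ^ 2 + (p : ℤ) * y ^ 2 - 2 * (u : ℤ) * z ^ 2 := by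
    rw [← ZMod.intCast_zmod_eq_zero_iff_dvd]
    have hLn : ((2 * u : ℕ) : ℤ) ∣ x + β * y + γ * z := by
      refine dvd_trans ?_ hdvdL
      rw [hMc]; push_cast; exact ⟨p, by ring⟩
    have e0 : ((x + β * y + γ * z : ℤ) : ZMod (2 * u)) = 0 :=
      (ZMod.intCast_zmod_eq_zero_iff_dvd _ _).mpr hLn
    have eβ : ((β - 1 : ℤ) : ZMod (2 * u)) = 0 := by
      rw [ZMod.intCast_zmod_eq_zero_iff_dvd]
      have := hβn; push_cast; exact_mod_cast this
    have eγ : ((γ : ℤ) : ZMod (2 * u)) = 0 := by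
      rw [ZMod.intCast_zmod_eq_zero_iff_dvd]
      have := hγn; push_cast; exact_mod_cast this
    have hpn : (2 * u : ℕ) ∣ p + 1 := by
      have h2 : 2 ∣ p + 1 := by
        have : p % 2 = 1 := Nat.odd_iff.mp (hp.odd_of_ne_two (by omega))
        omega
      have hc2u : Nat.Coprime 2 u :=
        ((Nat.Prime.coprime_iff_not_dvd Nat.prime_two).mpr (by omega))
      exact Nat.Coprime.mul_dvd_of_dvd_of_dvd hc2u h2 hpu
    have epm : ((p : ℕ) : ZMod (2 * u)) = -1 := by
      have e2 : (((p + 1 : ℕ) : ℕ) : ZMod (2 * u)) = 0 :=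
        (ZMod.natCast_eq_zero_iff _ _).mpr hpn
      push_cast at e2
      linear_combination e2
    have h2uz : ((2 * u : ℕ) : ZMod (2 * u)) = 0 := ZMod.natCast_self (2 * u)
    push_cast at e0 eβ eγ h2uz ⊢
    have ex : (x : ZMod (2 * u)) = -(y : ZMod (2 * u)) := by
      linear_combination e0 - (y : ZMod (2 * u)) * eβ - (z : ZMod (2 * u)) * eγ
    rw [ex, epm]
    linear_combination -(z : ZMod (2 * u)) ^ 2 * h2uz
  have hMval : ((2 * u * p : ℕ) : ℤ) ∣ x ^ 2 + (p : ℤ) * y ^ 2 - 2 * (u : ℤ) * z ^ 2 := by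
    have e1 : ((2 * u * p : ℕ) : ℤ) = ((2 * u : ℕ) : ℤ) * ((p : ℕ) : ℤ) := by push_cast; ring
    rw [e1]
    exact hicop.mul_dvd hnval hpval
  -- non-squareness facts
  have ns_p : ∀ k : ℕ, k ^ 2 ≠ p := by
    intro k hcon
    have hdk : k ∣ p := ⟨k, by rw [← hcon]; ring⟩
    rcases (Nat.dvd_prime hp).mp hdk with h1 | h1
    · rw [h1] at hcon; simp at hcon; omega
    · rw [h1] at hcon
      have h2 : 2 * p ≤ p * p := Nat.mul_le_mul_right p hp2
      have h3 : p ^ 2 = p * p := sq p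
      omega
  have ns_np : ∀ k : ℕ, k ^ 2 ≠ 2 * u * p := by
    intro k hcon
    have hpk : p ∣ k ^ 2 := ⟨2 * u, by rw [hcon]; ring⟩
    have hpx : p ∣ k := hp.dvd_of_dvd_pow hpk
    obtain ⟨j, hj⟩ := hpx
    rw [hj] at hcon
    have hz : ((p * j) ^ 2 : ℤ) = 2 * u * p := by exact_mod_cast hcon
    have hz2 : (p : ℤ) * ((p : ℤ) * j ^ 2) = (p : ℤ) * (2 * u) := by linear_combination hz
    have hz3 : (p : ℤ) * (j : ℤ) ^ 2 = 2 * u := by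
      have hpne : (p : ℤ) ≠ 0 := by exact_mod_cast hp0.ne'
      exact mul_left_cancel₀ hpne hz2
    have : p ∣ 2 * u := by
      have : (p : ℤ) ∣ 2 * (u : ℤ) := ⟨(j : ℤ) ^ 2, hz3.symm⟩
      have h4 : (p : ℤ) ∣ ((2 * u : ℕ) : ℤ) := by push_cast; exact this
      exact_mod_cast Int.ofNat_dvd.mp h4
    exact hpnd this
  -- refined bounds
  have bound_refine : ∀ (w : ℤ) (B : ℕ), w ^ 2 ≤ (B : ℤ) → (∀ k : ℕ, k ^ 2 ≠ B) →
      w ^ 2 ≤ (B : ℤ) - 1 := by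
    intro w B hw hne
    have hB1 : 1 ≤ B := by
      have h0 : (0 : ℕ) ^ 2 ≠ B := hne 0
      simp at h0
      omega
    have h1 : (w.natAbs : ℤ) ^ 2 = w ^ 2 := by rw [Int.natAbs_sq]
    have h2 : (w.natAbs) ^ 2 ≤ B := by
      have h5 : ((w.natAbs ^ 2 : ℕ) : ℤ) ≤ (B : ℤ) := by rw [Nat.cast_pow, h1]; exact hw
      exact_mod_cast h5
    have h3 : (w.natAbs) ^ 2 ≤ B - 1 := by have := hne w.natAbs; omega
    have h4 : ((w.natAbs ^ 2 : ℕ) : ℤ) ≤ ((B - 1 : ℕ) : ℤ) := Nat.cast_le.mpr h3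
    rw [Nat.cast_pow, h1, Nat.cast_sub hB1] at h4
    simpa using h4
  have hb_x : x ^ 2 ≤ 2 * (u : ℤ) * p - 1 := by
    have h1 : x ^ 2 ≤ ((2 * u * p : ℕ) : ℤ) := by
      calc x ^ 2 ≤ (X : ℤ) ^ 2 := sq_le_sq' hx1 hx2
      _ ≤ _ := by exact_mod_cast hXs
    have := bound_refine x (2 * u * p) h1 ns_np
    push_cast at this
    linarith
  have hb_y : y ^ 2 ≤ 2 * (u : ℤ) - 1 := by
    have h1 : y ^ 2 ≤ ((2 * u : ℕ) : ℤ) := by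
      calc y ^ 2 ≤ (Y : ℤ) ^ 2 := sq_le_sq' hy1 hy2
      _ ≤ _ := by exact_mod_cast hYs
    have := bound_refine y (2 * u) h1 hns
    push_cast at this
    linarith
  have hb_z : z ^ 2 ≤ (p : ℤ) - 1 := by
    have h1 : z ^ 2 ≤ ((p : ℕ) : ℤ) := by
      calc z ^ 2 ≤ (Z : ℤ) ^ 2 := sq_le_sq' hz1 hz2
      _ ≤ _ := by exact_mod_cast hZs
    exact bound_refine z p h1 ns_p
  -- val ∈ {0, M}
  obtain ⟨k, hk⟩ := hMval
  rw [hMc] at hk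
  have hup0 : (0 : ℤ) < 2 * (u : ℤ) * p := by positivity
  have hu0' : (0 : ℤ) < (u : ℤ) := by exact_mod_cast hu0
  have hp0' : (0 : ℤ) < (p : ℤ) := by exact_mod_cast hp0
  have hvlow : -(2 * (u : ℤ) * p) < x ^ 2 + (p : ℤ) * y ^ 2 - 2 * (u : ℤ) * z ^ 2 := by
    have t1 : (0 : ℤ) ≤ x ^ 2 + (p : ℤ) * y ^ 2 := by positivity
    have t2 : 2 * (u : ℤ) * z ^ 2 ≤ 2 * (u : ℤ) * ((p : ℤ) - 1) :=
      mul_le_mul_of_nonneg_left hb_z (by positivity)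
    have e : 2 * (u : ℤ) * ((p : ℤ) - 1) = 2 * (u : ℤ) * (p : ℤ) - 2 * (u : ℤ) := by ring
    rw [e] at t2
    linarith [t1, t2, hu0']
  have hvhigh : x ^ 2 + (p : ℤ) * y ^ 2 - 2 * (u : ℤ) * z ^ 2 < 2 * (2 * (u : ℤ) * p) := by
    have t1 : (0 : ℤ) ≤ 2 * (u : ℤ) * z ^ 2 := by positivity
    have t3 : (p : ℤ) * y ^ 2 ≤ (p : ℤ) * (2 * (u : ℤ) - 1) :=
      mul_le_mul_of_nonneg_left hb_y (by positivity)
    have e : (p : ℤ) * (2 * (u : ℤ) - 1) = 2 * (u : ℤ) * (p : ℤ) - (p : ℤ) := by ring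
    rw [e] at t3
    linarith [hb_x, t1, t3, hp0']
  have hk01 : k = 0 ∨ k = 1 := by
    rw [hk] at hvlow hvhigh
    have hklow : -1 < k := by
      by_contra hcon
      push_neg at hcon
      have : 2 * (u : ℤ) * p * k ≤ 2 * (u : ℤ) * p * (-1) :=
        mul_le_mul_of_nonneg_left hcon (le_of_lt hup0)
      linarith
    have hkhigh : k < 2 := by
      by_contra hcon
      push_neg at hcon
      have : 2 * (u : ℤ) * p * 2 ≤ 2 * (u : ℤ) * p * k :=
        mul_le_mul_of_nonneg_left hcon (le_of_lt hup0)
      linarith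
    omega
  rcases hk01 with hk0 | hk1
  · rw [hk0, mul_zero] at hk
    refine ⟨x, y, z, p, hp, hp4, by linarith [hk], ?_⟩
    intro hz0
    rw [hz0] at hk
    have t1 : (0 : ℤ) ≤ (p : ℤ) * y ^ 2 := by positivity
    have t2 : (0 : ℤ) ≤ x ^ 2 := sq_nonneg x
    have hx0 : x = 0 := by
      have : x ^ 2 = 0 := by linarith
      exact pow_eq_zero_iff (n := 2) (by norm_num) |>.mp this
    have hy0 : y = 0 := by
      have hy2' : (p : ℤ) * y ^ 2 = 0 := by linarith
      have : y ^ 2 = 0 := by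
        rcases mul_eq_zero.mp hy2' with h' | h'
        · exact absurd h' (by positivity)
        · exact h'
      exact pow_eq_zero_iff (n := 2) (by norm_num) |>.mp this
    exact hnz ⟨hx0, hy0, hz0⟩
  · rw [hk1, mul_one] at hk
    refine ⟨x * z + (p : ℤ) * y, y * z - x, z ^ 2 + (p : ℤ), p, hp, hp4, ?_, ?_⟩
    · linear_combination (z ^ 2 + (p : ℤ)) * hk
    · intro hcon
      have := sq_nonneg z
      linarith [hp0']


lemma sq_mod_four (k : ℕ) : (k % 2 = 0 ∧ k ^ 2 % 4 = 0) ∨ (k % 2 = 1 ∧ k ^ 2 % 4 = 1) := by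
  rcases Nat.even_or_odd k with ⟨j, hj⟩ | ⟨j, hj⟩
  · left
    have : k ^ 2 = 4 * j ^ 2 := by rw [hj]; ring
    omega
  · right
    have : k ^ 2 = 4 * (j ^ 2 + j) + 1 := by rw [hj]; ring
    omega

lemma three_sq_int (m : ℕ) :
    ∃ a b c : ℤ, a ^ 2 + b ^ 2 + c ^ 2 = 2 * ((2 * m + 1 : ℕ) : ℤ) := by
  have hns : ∀ k : ℕ, k ^ 2 ≠ 2 * (2 * m + 1) := by
    intro k
    rcases sq_mod_four k with ⟨_, h⟩ | ⟨_, h⟩ <;> omega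
  obtain ⟨X₁, Y₁, Z₁, p, hp, hp4, heq, hZ₁⟩ := isotropic (2 * m + 1) (by omega) hns
  haveI : Fact p.Prime := ⟨hp⟩
  obtain ⟨a, b, hab⟩ := Nat.Prime.sq_add_sq (p := p) (by omega)
  have habz : ((a : ℤ)) ^ 2 + ((b : ℤ)) ^ 2 = (p : ℤ) := by exact_mod_cast hab
  have hrep : X₁ ^ 2 + ((a : ℤ) * Y₁) ^ 2 + ((b : ℤ) * Y₁) ^ 2
      = 2 * ((2 * m + 1 : ℕ) : ℤ) * ((Z₁.natAbs : ℕ) : ℤ) ^ 2 := by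
    have hza : ((Z₁.natAbs : ℕ) : ℤ) ^ 2 = Z₁ ^ 2 := by rw [Int.natAbs_sq]
    rw [hza]
    push_cast
    push_cast at heq
    linear_combination heq + Y₁ ^ 2 * habz
  have hZna : Z₁.natAbs ≠ 0 := Int.natAbs_ne_zero.mpr hZ₁
  exact dc_descent (2 * ((2 * m + 1 : ℕ) : ℤ)) Z₁.natAbs hZna _ _ _ hrep

theorem stmt_17 (m : ℕ) :
    ∃ a b c : ℕ, 4 * m + 2 = a ^ 2 + b ^ 2 + c ^ 2 ∧ Odd a ∧ b % 2 ≠ c % 2 := by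
  obtain ⟨A, B, C, hABC⟩ := three_sq_int m
  have heq : 4 * m + 2 = A.natAbs ^ 2 + B.natAbs ^ 2 + C.natAbs ^ 2 := by
    have h1 : ((A.natAbs ^ 2 + B.natAbs ^ 2 + C.natAbs ^ 2 : ℕ) : ℤ)
        = ((4 * m + 2 : ℕ) : ℤ) := by
      push_cast [Nat.cast_pow]
      rw [sq_abs, sq_abs, sq_abs]
      push_cast at hABC
      linarith
    exact_mod_cast h1.symm
  set a' : ℕ := A.natAbs
  set b' : ℕ := B.natAbs
  set c' : ℕ := C.natAbs
  rcases sq_mod_four a' with ⟨ha, ha4⟩ | ⟨ha, ha4⟩ <;>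
    rcases sq_mod_four b' with ⟨hb, hb4⟩ | ⟨hb, hb4⟩ <;>
      rcases sq_mod_four c' with ⟨hc, hc4⟩ | ⟨hc, hc4⟩
  · omega
  · omega
  · omega
  · exact ⟨b', a', c', by omega, Nat.odd_iff.mpr hb, by omega⟩
  · omega
  · exact ⟨a', b', c', by omega, Nat.odd_iff.mpr ha, by omega⟩
  · exact ⟨a', b', c', by omega, Nat.odd_iff.mpr ha, by omega⟩
  · omega
end
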